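/- Let f be a loop-count function on states of n crossings that is B-pseudo-adequate, i.e. f(Function.update s_B i false) ≤ f(s_B) for every index i. Then for every state s ≠ s_B one has u̲deg w(s) ≥ −n − 2 f(s_B) + 4, which is strictly greater than u̲deg w(s_B) = −n − 2 f(s_B) + 2; consequently the bracket ⟨f⟩ := Σ_s w(s) is nonzero and u̲deg ⟨f⟩ = −n − 2 f(s_B) + 2. -/

import Mathlib

open LaurentPolynomial

/-- Maximal degree (max of the support), with convention `odeg 0 = 0`. -/
noncomputable def odeg (g : LaurentPolynomial ℤ) : ℤ := g.coeff.support.max.unbotD 0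

/-- Minimal degree (min of the support), with convention `udeg 0 = 0`. -/
noncomputable def udeg (g : LaurentPolynomial ℤ) : ℤ := g.coeff.support.min.untopD 0

/-- The span of a Laurent polynomial. -/
noncomputable def lspan (g : LaurentPolynomial ℤ) : ℤ := odeg g - udeg g

/-- Number of crossings spliced by an A-splice in the state `s`. -/
def alpha {n : ℕ} (s : Fin n → Bool) : ℕ :=
  (Finset.univ.filter (fun i => s i = false)).card

/-- Number of crossings spliced by a B-splice in the state `s`. -/
def beta {n : ℕ} (s : Fin n → Bool) : ℕ :=
  (Finset.univ.filter (fun i => s i = true)).card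

/-- A loop-count function: at least one loop in every state, and changing the
splice at one crossing changes the number of loops by at most one. -/
def IsLoopCount {n : ℕ} (f : (Fin n → Bool) → ℕ) : Prop :=
  (∀ s, 1 ≤ f s) ∧
    ∀ (s : Fin n → Bool) (i : Fin n),
      |(f (Function.update s i (!(s i))) : ℤ) - (f s : ℤ)| ≤ 1

/-- The weight `A^(α(s)-β(s)) * (-A^2 - A^(-2))^(f(s)-1)` of a state `s`. -/
noncomputable def weight {n : ℕ} (f : (Fin n → Bool) → ℕ) (s : Fin n → Bool) :
    LaurentPolynomial ℤ :=
  T ((alpha s : ℤ) - (beta s : ℤ)) * (-T 2 - T (-2)) ^ (f s - 1)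

/-- The Kauffman bracket of a loop-count function: the sum of the weights. -/
noncomputable def bracket {n : ℕ} (f : (Fin n → Bool) → ℕ) : LaurentPolynomial ℤ :=
  ∑ s : Fin n → Bool, weight f s

/-!
The lowest term of `w(s)` is `±A^(α(s) - β(s) - 2 (f(s) - 1))`. Flipping one splice changes the
loop count by at most one, so `f` is `1`-Lipschitz for the Hamming distance on states. A state
`s ≠ s_B` with an A-splice at `i` is at distance `α(s) - 1` from `s_B` with `i` flipped, whose
loop count is at most `f(s_B)` by B-pseudo-adequacy; hence `f(s) ≤ f(s_B) + α(s) - 1`, and the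
lowest degree of `w(s)` exceeds that of `w(s_B)` by at least `2`. So the lowest term of `w(s_B)`
cannot cancel in the bracket.
-/

/-- `c * T d` is the lowest-order term of `g` (`c = 0` allowed). -/
structure HasTrailingTerm {R : Type*} [Semiring R] (g : R[T;T⁻¹]) (d : ℤ) (c : R) : Prop where
  coeff_eq : g.coeff d = c
  coeff_of_lt : ∀ m < d, g.coeff m = 0

lemma hasTrailingTerm_T {R : Type*} [Semiring R] (d : ℤ) :
    HasTrailingTerm (T d : R[T;T⁻¹]) d 1 :=
  ⟨by simp, fun m hm => by simp [hm.ne']⟩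

namespace HasTrailingTerm

variable {R : Type*} [Semiring R] {p q : R[T;T⁻¹]} {a b : ℤ} {c c' : R}

lemma le_of_mem_support (hp : HasTrailingTerm p a c) {m : ℤ} (hm : m ∈ p.coeff.support) :
    a ≤ m :=
  not_lt.1 fun h => Finsupp.mem_support_iff.1 hm (hp.coeff_of_lt m h)

lemma ne_zero (hp : HasTrailingTerm p a c) (hc : c ≠ 0) : p ≠ 0 := by
  rintro rfl
  exact hc hp.coeff_eq.symm

lemma mul (hp : HasTrailingTerm p a c) (hq : HasTrailingTerm q b c') :
    HasTrailingTerm (p * q) (a + b) (c * c') := by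
  classical
  constructor
  · rw [AddMonoidAlgebra.coeff_mul, Finsupp.sum_eq_single a, Finsupp.sum_eq_single b, if_pos rfl,
      hp.coeff_eq, hq.coeff_eq]
    · exact fun j _ hjb => if_neg (by omega)
    · simp
    · intro i hi hia
      refine Finset.sum_eq_zero fun j hj => if_neg ?_
      have := hp.le_of_mem_support (Finsupp.mem_support_iff.2 hi)
      have := hq.le_of_mem_support hj
      omega
    · simp
  · intro m hm
    refine Finsupp.notMem_support_iff.1 fun hmem => ?_
    obtain ⟨i, hi, j, hj, rfl⟩ :=
      Finset.mem_add.1 (AddMonoidAlgebra.support_coeff_mul_subset p q hmem)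
    have := hp.le_of_mem_support hi
    have := hq.le_of_mem_support hj
    omega

lemma pow (hp : HasTrailingTerm p a c) (k : ℕ) : HasTrailingTerm (p ^ k) (k * a) (c ^ k) := by
  induction k with
  | zero => simpa [T_zero] using hasTrailingTerm_T (R := R) 0
  | succ k ih => simpa [pow_succ, add_mul] using ih.mul hp

lemma add_of_coeff_eq_zero (hp : HasTrailingTerm p a c) (hq : ∀ m ≤ a, q.coeff m = 0) :
    HasTrailingTerm (p + q) a c where
  coeff_eq := by simp [AddMonoidAlgebra.coeff_add, hp.coeff_eq, hq a le_rfl]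
  coeff_of_lt m hm := by
    simp [AddMonoidAlgebra.coeff_add, hp.coeff_of_lt m hm, hq m hm.le]

lemma sum_of_coeff_eq_zero {ι : Type*} [DecidableEq ι] {s : Finset ι} {g : ι → R[T;T⁻¹]}
    {i : ι} (hi : i ∈ s) (hgi : HasTrailingTerm (g i) a c)
    (hg : ∀ j ∈ s, j ≠ i → ∀ m ≤ a, (g j).coeff m = 0) :
    HasTrailingTerm (∑ j ∈ s, g j) a c := by
  rw [← Finset.add_sum_erase s g hi]
  refine hgi.add_of_coeff_eq_zero fun m hm => ?_
  rw [AddMonoidAlgebra.coeff_sum, Finset.sum_apply']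
  exact Finset.sum_eq_zero fun j hj =>
    hg j (Finset.mem_of_mem_erase hj) (Finset.ne_of_mem_erase hj) m hm

lemma udeg_eq {g : ℤ[T;T⁻¹]} {e : ℤ} (hg : HasTrailingTerm g a e) (he : e ≠ 0) :
    udeg g = a := by
  have hmem : a ∈ g.coeff.support := Finsupp.mem_support_iff.2 (hg.coeff_eq ▸ he)
  have hmin : g.coeff.support.min = a :=
    le_antisymm (Finset.min_le hmem)
      (Finset.le_min fun m hm => WithTop.coe_le_coe.2 (hg.le_of_mem_support hm))
  rw [udeg, hmin, WithTop.untopD_coe]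

end HasTrailingTerm

lemma hasTrailingTerm_neg_T_two_sub_T_neg_two {R : Type*} [Ring R] :
    HasTrailingTerm (-T 2 - T (-2) : R[T;T⁻¹]) (-2) (-1) where
  coeff_eq := by simp [AddMonoidAlgebra.coeff_sub, AddMonoidAlgebra.coeff_neg]
  coeff_of_lt m hm := by
    simp [AddMonoidAlgebra.coeff_sub, AddMonoidAlgebra.coeff_neg, show (2 : ℤ) ≠ m by omega,
      show (-2 : ℤ) ≠ m by omega]

lemma hasTrailingTerm_weight {n : ℕ} (f : (Fin n → Bool) → ℕ) (s : Fin n → Bool) :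
    HasTrailingTerm (weight f s) (alpha s - beta s - 2 * (f s - 1 : ℕ)) ((-1) ^ (f s - 1)) := by
  have h := (hasTrailingTerm_T (R := ℤ) (alpha s - beta s)).mul
    (hasTrailingTerm_neg_T_two_sub_T_neg_two.pow (f s - 1))
  rwa [one_mul, mul_neg, mul_comm _ (2 : ℤ), ← sub_eq_add_neg] at h

lemma udeg_weight {n : ℕ} (f : (Fin n → Bool) → ℕ) (s : Fin n → Bool) :
    udeg (weight f s) = alpha s - beta s - 2 * (f s - 1 : ℕ) :=
  (hasTrailingTerm_weight f s).udeg_eq (pow_ne_zero _ (by norm_num))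

section States

variable {n : ℕ}

lemma alpha_add_beta (s : Fin n → Bool) : alpha s + beta s = n := by
  simpa [alpha, beta] using
    Finset.card_filter_add_card_filter_not (s := Finset.univ) (fun i => s i = false)

lemma alpha_const_true : alpha (fun _ : Fin n => true) = 0 := by
  simp [alpha]

lemma beta_const_true : beta (fun _ : Fin n => true) = n := by
  simp [beta]

lemma hammingDist_const_true (s : Fin n → Bool) : hammingDist s (fun _ => true) = alpha s := by
  simp [hammingDist, alpha]

end States

lemma hammingDist_update_add_one {ι : Type*} {β : ι → Type*} [Fintype ι] [DecidableEq ι]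
    [∀ i, DecidableEq (β i)] (x y : ∀ i, β i) {i : ι} (h : x i ≠ y i) :
    hammingDist x (Function.update y i (x i)) + 1 = hammingDist x y := by
  have hset : ({j | x j ≠ Function.update y i (x i) j} : Finset ι) =
      ({j | x j ≠ y j} : Finset ι).erase i := by
    ext j
    by_cases hj : j = i <;> simp [hj]
  rw [hammingDist, hset, Finset.card_erase_add_one (by simpa using h), hammingDist]

namespace IsLoopCount

variable {n : ℕ} {f : (Fin n → Bool) → ℕ}

lemma le_add_hammingDist (hf : IsLoopCount f) (s t : Fin n → Bool) :
    f s ≤ f t + hammingDist s t := by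
  induction hd : hammingDist s t generalizing t with
  | zero => simp [hammingDist_eq_zero.1 hd]
  | succ k ih =>
    have hst : s ≠ t := hammingDist_pos.1 (by omega)
    obtain ⟨i, hi⟩ := Function.ne_iff.1 hst
    have hflip : f (Function.update t i (s i)) ≤ f t + 1 := by
      have := (abs_le.1 (hf.2 t i)).2
      rw [Bool.eq_not.2 hi]
      omega
    have := ih (Function.update t i (s i)) (by have := hammingDist_update_add_one s t hi; omega)
    omega

lemma add_one_le_of_ne_const_true (hf : IsLoopCount f)
    (hB : ∀ i : Fin n, f (Function.update (fun _ => true) i false) ≤ f (fun _ => true))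
    {s : Fin n → Bool} (hs : s ≠ fun _ => true) : f s + 1 ≤ f (fun _ => true) + alpha s := by
  obtain ⟨i, hi⟩ := Function.ne_iff.1 hs
  have hdist := hammingDist_update_add_one s (fun _ => true) hi
  rw [hammingDist_const_true, show s i = false by simpa using hi] at hdist
  have := hf.le_add_hammingDist s (Function.update (fun _ => true) i false)
  have := hB i
  omega

end IsLoopCount

/-- If `f` is B-pseudo-adequate, then every state other than `s_B` has weight of
minimal degree at least `-n - 2 f(s_B) + 4`, strictly greater than
`u̲deg w(s_B) = -n - 2 f(s_B) + 2`; consequently the bracket is nonzero and has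
minimal degree `-n - 2 f(s_B) + 2`. -/
theorem udeg_bracket_of_B_pseudo_adequate {n : ℕ} (f : (Fin n → Bool) → ℕ)
    (hf : IsLoopCount f)
    (hB : ∀ i : Fin n, f (Function.update (fun _ => true) i false) ≤ f (fun _ => true)) :
    (∀ s : Fin n → Bool, s ≠ (fun _ => true) →
        -(n : ℤ) - 2 * (f (fun _ => true) : ℤ) + 4 ≤ udeg (weight f s)) ∧
    udeg (weight f (fun _ => true)) < -(n : ℤ) - 2 * (f (fun _ => true) : ℤ) + 4 ∧
    udeg (weight f (fun _ => true)) = -(n : ℤ) - 2 * (f (fun _ => true) : ℤ) + 2 ∧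
    bracket f ≠ 0 ∧
    udeg (bracket f) = -(n : ℤ) - 2 * (f (fun _ => true) : ℤ) + 2 := by
  set sB : Fin n → Bool := fun _ => true
  have hdegB : udeg (weight f sB) = -(n : ℤ) - 2 * (f sB : ℤ) + 2 := by
    have := hf.1 sB
    rw [udeg_weight, alpha_const_true, beta_const_true]
    omega
  have hdeg (s : Fin n → Bool) (hs : s ≠ sB) :
      -(n : ℤ) - 2 * (f sB : ℤ) + 4 ≤ udeg (weight f s) := by
    have : f s + 1 ≤ f sB + alpha s := hf.add_one_le_of_ne_const_true hB hs
    have := alpha_add_beta s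
    have := hf.1 s
    rw [udeg_weight]
    omega
  have hbracket : HasTrailingTerm (bracket f) (udeg (weight f sB)) ((-1) ^ (f sB - 1)) := by
    refine HasTrailingTerm.sum_of_coeff_eq_zero (Finset.mem_univ sB) ?_ fun s _ hs m hm => ?_
    · rw [udeg_weight]
      exact hasTrailingTerm_weight f sB
    · refine (hasTrailingTerm_weight f s).coeff_of_lt m ?_
      rw [← udeg_weight]
      have := hdeg s hs
      omega
  exact ⟨hdeg, by omega, hdegB, hbracket.ne_zero (by simp),
    (hbracket.udeg_eq (by simp)).trans hdegB⟩
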